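/- Let K > 0 and let τ be a real number with 0 < τ < π/(2√K). Define φ(t) = (1 − cos(√K · t))/K. Then there exist real numbers ν ∈ [1, 2), b > φ(τ), and δ > 0 such that for all t ∈ [0, τ]: ν · cos(√K · t)/(b − φ(t)) − 2K > δ. -/

import Mathlib

/-!
Put `c = cos (√K τ) ∈ (0, 1]` and choose `ν = 2 - c`, `b = φ τ + c / (4K)`. For `t ∈ [0, τ]` the
value `x = cos (√K t)` lies in `[c, 1]` and `b - φ t = (x - 3c/4) / K`, so the quotient equals
`K (2 - c) x / (x - 3c/4)`. Since `x ↦ x / (x - 3c/4)` decreases, this is at least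
`K (2 - c) / (1 - 3c/4) > K (2 + c/4)`, which leaves the margin `δ = K c / 4`.
-/

open Real

theorem two_add_quarter_lt_two_sub_mul_div {c x : ℝ} (hc : 0 < c) (hcx : c ≤ x) (hx : x ≤ 1) :
    2 + c / 4 < (2 - c) * x / (x - 3 * c / 4) := by
  rw [lt_div_iff₀ (by linarith)]
  nlinarith

theorem mul_lt_pi_div_two {s τ : ℝ} (hs : 0 < s) (hτ : τ < π / (2 * s)) : s * τ < π / 2 := by
  rw [lt_div_iff₀ (by positivity)] at hτ
  linarith

theorem stmt_1 (K τ : ℝ) (hK : 0 < K) (hτ : 0 < τ)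
    (hτ' : τ < π / (2 * Real.sqrt K))
    (φ : ℝ → ℝ) (hφ : ∀ t, φ t = (1 - Real.cos (Real.sqrt K * t)) / K) :
    ∃ ν b δ : ℝ, 1 ≤ ν ∧ ν < 2 ∧ φ τ < b ∧ 0 < δ ∧
      ∀ t ∈ Set.Icc (0 : ℝ) τ,
        ν * Real.cos (Real.sqrt K * t) / (b - φ t) - 2 * K > δ := by
  have hs : 0 < √K := sqrt_pos.mpr hK
  have hsτ : √K * τ < π / 2 := mul_lt_pi_div_two hs hτ'
  set c := cos (√K * τ)
  have hc : 0 < c := cos_pos_of_mem_Ioo ⟨by nlinarith [pi_pos], hsτ⟩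
  have hc1 : c ≤ 1 := cos_le_one _
  refine ⟨2 - c, φ τ + c / (4 * K), K * c / 4, by linarith, by linarith,
    lt_add_of_pos_right _ (by positivity), by positivity, ?_⟩
  rintro t ⟨ht0, htτ⟩
  have hcx : c ≤ cos (√K * t) :=
    cos_le_cos_of_nonneg_of_le_pi (by positivity) (by linarith [pi_pos]) (by gcongr)
  have hden : φ τ + c / (4 * K) - φ t = (cos (√K * t) - 3 * c / 4) / K := by
    rw [hφ, hφ]; field_simp; ring
  have key := two_add_quarter_lt_two_sub_mul_div hc hcx (cos_le_one _)
  calc K * c / 4 = K * (2 + c / 4) - 2 * K := by ring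
    _ < K * ((2 - c) * cos (√K * t) / (cos (√K * t) - 3 * c / 4)) - 2 * K := by gcongr
    _ = (2 - c) * cos (√K * t) / (φ τ + c / (4 * K) - φ t) - 2 * K := by
      rw [hden, div_div_eq_mul_div]; ring
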